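/- arXiv:1211.0100 — 6 statements merged into one kernel-verified Lean document; each statement's English description precedes it below -/
import Mathlib

section
/- Let c : ℝ → ℝ be continuously differentiable with c(u) ≠ 0 for all u. Let v : ℝ × ℝ → ℝ (a function of the variables (x,u)) be twice continuously differentiable and satisfy, for all (x,u), the PDE c(u)·( v_x²·v_uu − 2·v_x·v_u·v_ux + v_xx·v_u² − c(u)²·v_xx ) − 2·c'(u)·v_x²·v_u = 0. Suppose X : ℝ × ℝ → ℝ (a function of (V,u)) is twice continuously differentiable and satisfies v(X(V,u), u) = V for all (V,u), with ∂X/∂V(V,u) ≠ 0 for all (V,u). Then X satisfies the linear wave equation X_VV(V,u) = ∂/∂u [ c(u)⁻²·X_u(V,u) ] at every point (V,u), where subscripts denote partial derivatives. -/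
/-!
Write `x = X(V, u)`. Differentiating the identity `v(X(V, u), u) = V` once and twice gives,
with the derivatives of `v` taken at `(x, u)` and `v_xu = v_ux`,
`v_x X_V = 1`, `v_x X_u + v_u = 0`, `v_xx X_V² + v_x X_VV = 0` and
`(v_xx X_u + 2 v_xu) X_u + v_x X_uu + v_uu = 0`. Solving these for `v_u`, `v_xx`, `v_uu` and
substituting into (4.7) leaves `v_x³ (c³ X_VV - c X_uu + 2 c' X_u) = 0`, and `v_x ≠ 0` because
`v_x X_V = 1`; this is `X_VV = (c⁻² X_u)_u`.
-/

noncomputable def partialFst (f : ℝ × ℝ → ℝ) (q : ℝ × ℝ) : ℝ :=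
  deriv (fun x => f (x, q.2)) q.1

noncomputable def partialSnd (f : ℝ × ℝ → ℝ) (q : ℝ × ℝ) : ℝ :=
  deriv (fun y => f (q.1, y)) q.2

section Partial

variable {f : ℝ × ℝ → ℝ} {L : ℝ × ℝ →L[ℝ] ℝ} {q : ℝ × ℝ}

theorem HasFDerivAt.hasDerivAt_fst (h : HasFDerivAt f L q) :
    HasDerivAt (fun x => f (x, q.2)) (L (1, 0)) q.1 :=
  h.comp_hasDerivAt q.1 ((hasDerivAt_id q.1).prodMk (hasDerivAt_const q.1 q.2))

theorem HasFDerivAt.hasDerivAt_snd (h : HasFDerivAt f L q) :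
    HasDerivAt (fun y => f (q.1, y)) (L (0, 1)) q.2 :=
  h.comp_hasDerivAt q.2 ((hasDerivAt_const q.2 q.1).prodMk (hasDerivAt_id q.2))

theorem HasFDerivAt.partialFst_eq (h : HasFDerivAt f L q) : partialFst f q = L (1, 0) :=
  h.hasDerivAt_fst.deriv

theorem HasFDerivAt.partialSnd_eq (h : HasFDerivAt f L q) : partialSnd f q = L (0, 1) :=
  h.hasDerivAt_snd.deriv

theorem DifferentiableAt.hasDerivAt_partialFst (h : DifferentiableAt ℝ f q) :
    HasDerivAt (fun x => f (x, q.2)) (partialFst f q) q.1 := by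
  rw [h.hasFDerivAt.partialFst_eq]
  exact h.hasFDerivAt.hasDerivAt_fst

theorem DifferentiableAt.hasDerivAt_partialSnd (h : DifferentiableAt ℝ f q) :
    HasDerivAt (fun y => f (q.1, y)) (partialSnd f q) q.2 := by
  rw [h.hasFDerivAt.partialSnd_eq]
  exact h.hasFDerivAt.hasDerivAt_snd

theorem HasDerivAt.comp_prodMk {a b : ℝ → ℝ} {a' b' t : ℝ}
    (hf : DifferentiableAt ℝ f (a t, b t)) (ha : HasDerivAt a a' t) (hb : HasDerivAt b b' t) :
    HasDerivAt (fun s => f (a s, b s))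
      (partialFst f (a t, b t) * a' + partialSnd f (a t, b t) * b') t := by
  refine (hf.hasFDerivAt.comp_hasDerivAt t (ha.prodMk hb)).congr_deriv ?_
  have hsplit : (a', b') = a' • ((1 : ℝ), (0 : ℝ)) + b' • ((0 : ℝ), (1 : ℝ)) := by simp
  rw [hf.hasFDerivAt.partialFst_eq, hf.hasFDerivAt.partialSnd_eq, hsplit, map_add, map_smul,
    map_smul, smul_eq_mul, smul_eq_mul, mul_comm a', mul_comm b']

theorem Differentiable.partialFst_eq_fderiv (hf : Differentiable ℝ f) :
    partialFst f = fun p => fderiv ℝ f p (1, 0) :=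
  funext fun p => (hf p).hasFDerivAt.partialFst_eq

theorem Differentiable.partialSnd_eq_fderiv (hf : Differentiable ℝ f) :
    partialSnd f = fun p => fderiv ℝ f p (0, 1) :=
  funext fun p => (hf p).hasFDerivAt.partialSnd_eq

theorem ContDiff.partialFst {m n : WithTop ℕ∞} (hf : ContDiff ℝ n f) (hmn : m + 1 ≤ n) :
    ContDiff ℝ m (_root_.partialFst f) := by
  have hd : Differentiable ℝ f :=
    (hf.of_le (le_trans le_add_self hmn)).differentiable one_ne_zero
  rw [hd.partialFst_eq_fderiv]
  exact (hf.fderiv_right hmn).clm_apply contDiff_const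

theorem ContDiff.partialSnd {m n : WithTop ℕ∞} (hf : ContDiff ℝ n f) (hmn : m + 1 ≤ n) :
    ContDiff ℝ m (_root_.partialSnd f) := by
  have hd : Differentiable ℝ f :=
    (hf.of_le (le_trans le_add_self hmn)).differentiable one_ne_zero
  rw [hd.partialSnd_eq_fderiv]
  exact (hf.fderiv_right hmn).clm_apply contDiff_const

theorem ContDiff.differentiable_partialFst {n : WithTop ℕ∞} (hf : ContDiff ℝ n f)
    (hn : 2 ≤ n) : Differentiable ℝ (_root_.partialFst f) :=
  (hf.partialFst (m := 1) hn).differentiable one_ne_zero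

theorem ContDiff.differentiable_partialSnd {n : WithTop ℕ∞} (hf : ContDiff ℝ n f)
    (hn : 2 ≤ n) : Differentiable ℝ (_root_.partialSnd f) :=
  (hf.partialSnd (m := 1) hn).differentiable one_ne_zero

theorem partialFst_partialSnd_comm (hf : ContDiff ℝ 2 f) (q : ℝ × ℝ) :
    partialFst (partialSnd f) q = partialSnd (partialFst f) q := by
  have hd2 : Differentiable ℝ (fderiv ℝ f) :=
    (hf.fderiv_right (m := 1) (by norm_num)).differentiable one_ne_zero
  have happly (w : ℝ × ℝ) : HasFDerivAt (fun p => fderiv ℝ f p w)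
      ((ContinuousLinearMap.apply ℝ ℝ w).comp (fderiv ℝ (fderiv ℝ f) q)) q :=
    (ContinuousLinearMap.apply ℝ ℝ w).hasFDerivAt.comp q (hd2 q).hasFDerivAt
  rw [(hf.differentiable two_ne_zero).partialSnd_eq_fderiv,
    (hf.differentiable two_ne_zero).partialFst_eq_fderiv,
    (happly _).partialFst_eq, (happly _).partialSnd_eq]
  exact (hf.contDiffAt.isSymmSndFDerivAt (by simp)) _ _

end Partial

theorem HasDerivAt.eq_zero_of_forall_eq {g : ℝ → ℝ} {g' t c : ℝ} (h : HasDerivAt g g' t)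
    (hg : ∀ s, g s = c) : g' = 0 := by
  rw [show g = fun _ => c from funext hg] at h
  exact h.unique (hasDerivAt_const t c)

section Hodograph

variable {v X : ℝ × ℝ → ℝ} (hinv : ∀ V u, v (X (V, u), u) = V)
include hinv

theorem hodograph_fst (hv : Differentiable ℝ v) (hX : Differentiable ℝ X) (V u : ℝ) :
    partialFst v (X (V, u), u) * partialFst X (V, u) = 1 := by
  have h := HasDerivAt.comp_prodMk (hv _) (hX (V, u)).hasDerivAt_partialFst (hasDerivAt_const V u)
  rw [show (fun s => v (X (s, u), u)) = id from funext fun s => hinv s u] at h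
  simpa using h.unique (hasDerivAt_id V)

theorem hodograph_snd (hv : Differentiable ℝ v) (hX : Differentiable ℝ X) (V u : ℝ) :
    partialFst v (X (V, u), u) * partialSnd X (V, u) + partialSnd v (X (V, u), u) = 0 := by
  have h := HasDerivAt.comp_prodMk (hv _) (hX (V, u)).hasDerivAt_partialSnd (hasDerivAt_id u)
  simpa using h.eq_zero_of_forall_eq fun s => hinv V s

theorem hodograph_fst_fst (hv : ContDiff ℝ 2 v) (hX : ContDiff ℝ 2 X) (V u : ℝ) :
    partialFst (partialFst v) (X (V, u), u) * partialFst X (V, u) ^ 2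
      + partialFst v (X (V, u), u) * partialFst (partialFst X) (V, u) = 0 := by
  have hXd := hX.differentiable two_ne_zero
  have h := (HasDerivAt.comp_prodMk (hv.differentiable_partialFst le_rfl _)
      (hXd (V, u)).hasDerivAt_partialFst (hasDerivAt_const V u)).mul
    (hX.differentiable_partialFst le_rfl (V, u)).hasDerivAt_partialFst
  have := h.eq_zero_of_forall_eq fun s =>
    hodograph_fst hinv (hv.differentiable two_ne_zero) hXd s u
  linear_combination this

theorem hodograph_snd_snd (hv : ContDiff ℝ 2 v) (hX : ContDiff ℝ 2 X) (V u : ℝ) :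
    (partialFst (partialFst v) (X (V, u), u) * partialSnd X (V, u)
        + 2 * partialSnd (partialFst v) (X (V, u), u)) * partialSnd X (V, u)
      + partialFst v (X (V, u), u) * partialSnd (partialSnd X) (V, u)
      + partialSnd (partialSnd v) (X (V, u), u) = 0 := by
  have hXd := hX.differentiable two_ne_zero
  have hX₂ := (hXd (V, u)).hasDerivAt_partialSnd
  have hX₂₂ := (hX.differentiable_partialSnd le_rfl (V, u)).hasDerivAt_partialSnd
  have h := ((HasDerivAt.comp_prodMk (hv.differentiable_partialFst le_rfl _) hX₂
      (hasDerivAt_id' u)).mul hX₂₂).add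
    (HasDerivAt.comp_prodMk (hv.differentiable_partialSnd le_rfl _) hX₂ (hasDerivAt_id' u))
  have := h.eq_zero_of_forall_eq fun s =>
    hodograph_snd hinv (hv.differentiable two_ne_zero) hXd V s
  linear_combination this - partialSnd X (V, u) * partialFst_partialSnd_comm hv (X (V, u), u)

end Hodograph

theorem hodograph_wave_eq {C C' a b A B D P Q R T : ℝ}
    (h₁ : a * P = 1) (h₂ : a * Q + b = 0) (h₁₁ : A * P ^ 2 + a * R = 0)
    (h₂₂ : (A * Q + 2 * B) * Q + a * T + D = 0)
    (hpde : C * (a ^ 2 * D - 2 * a * b * B + A * b ^ 2 - C ^ 2 * A) - 2 * C' * a ^ 2 * b = 0) :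
    C ^ 3 * R = C * T - 2 * C' * Q := by
  have ha : a ≠ 0 := left_ne_zero_of_mul_eq_one h₁
  have hb : b = -(a * Q) := by linear_combination h₂
  have hA : A = -(a ^ 3 * R) := by linear_combination a ^ 2 * h₁₁ - A * (a * P + 1) * h₁
  have hD : D = -((A * Q + 2 * B) * Q + a * T) := by linear_combination h₂₂
  subst hb hA hD
  have : a ^ 3 * (C ^ 3 * R - C * T + 2 * C' * Q) = 0 := by linear_combination hpde
  linear_combination (mul_eq_zero.mp this).resolve_left (pow_ne_zero 3 ha)

theorem stmt_6_general (c : ℝ → ℝ) (hc : ContDiff ℝ 1 c) (hc0 : ∀ u : ℝ, c u ≠ 0)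
    (v X : ℝ × ℝ → ℝ) (hv : ContDiff ℝ 2 v) (hX : ContDiff ℝ 2 X)
    (hPDE : ∀ x u : ℝ,
      c u * ((deriv (fun y => v (y, u)) x) ^ 2 * deriv (deriv (fun s => v (x, s))) u
        - 2 * deriv (fun y => v (y, u)) x * deriv (fun s => v (x, s)) u
            * deriv (fun s => deriv (fun y => v (y, s)) x) u
        + deriv (deriv (fun y => v (y, u))) x * (deriv (fun s => v (x, s)) u) ^ 2
        - (c u) ^ 2 * deriv (deriv (fun y => v (y, u))) x)
      - 2 * deriv c u * (deriv (fun y => v (y, u)) x) ^ 2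
          * deriv (fun s => v (x, s)) u = 0)
    (hinv : ∀ V u : ℝ, v (X (V, u), u) = V) :
    ∀ V u : ℝ, deriv (deriv (fun a => X (a, u))) V
      = deriv (fun s => ((c s) ^ 2)⁻¹ * deriv (fun r => X (V, r)) s) u := by
  intro V u
  have hvd := hv.differentiable two_ne_zero
  have hXd := hX.differentiable two_ne_zero
  have hwave := hodograph_wave_eq (hodograph_fst hinv hvd hXd V u) (hodograph_snd hinv hvd hXd V u)
    (hodograph_fst_fst hinv hv hX V u) (hodograph_snd_snd hinv hv hX V u) (hPDE (X (V, u)) u)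
  have hc' := (hc.differentiable one_ne_zero u).hasDerivAt
  have hrhs : HasDerivAt (fun s => ((c s) ^ 2)⁻¹ * deriv (fun r => X (V, r)) s) _ u :=
    ((hc'.pow 2).inv (pow_ne_zero 2 (hc0 u))).mul
      (hX.differentiable_partialSnd le_rfl (V, u)).hasDerivAt_partialSnd
  rw [hrhs.deriv]
  change partialFst (partialFst X) (V, u) = _ * partialSnd X (V, u) + _
  simp only [Pi.pow_apply, Pi.inv_apply, Nat.cast_ofNat, Nat.add_one_sub_one, pow_one]
  have hcu := hc0 u
  field_simp
  linear_combination hwave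

/-- Interchanging x and v maps the PDE (4.7), locally related to the inverse
potential system of the potential system of the nonlinear wave equation
u_tt = (c²(u)u_x)_x, invertibly into the linear wave equation
x_vv = (c⁻²(u)x_u)_u (equation (4.8)). -/
theorem stmt_6 (c : ℝ → ℝ) (hc : ContDiff ℝ 1 c) (hc0 : ∀ u : ℝ, c u ≠ 0)
    (v X : ℝ × ℝ → ℝ) (hv : ContDiff ℝ 2 v) (hX : ContDiff ℝ 2 X)
    (hPDE : ∀ x u : ℝ,
      c u * ((deriv (fun y => v (y, u)) x) ^ 2 * deriv (deriv (fun s => v (x, s))) u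
        - 2 * deriv (fun y => v (y, u)) x * deriv (fun s => v (x, s)) u
            * deriv (fun s => deriv (fun y => v (y, s)) x) u
        + deriv (deriv (fun y => v (y, u))) x * (deriv (fun s => v (x, s)) u) ^ 2
        - (c u) ^ 2 * deriv (deriv (fun y => v (y, u))) x)
      - 2 * deriv c u * (deriv (fun y => v (y, u)) x) ^ 2
          * deriv (fun s => v (x, s)) u = 0)
    (hinv : ∀ V u : ℝ, v (X (V, u), u) = V)
    (hXV : ∀ V u : ℝ, deriv (fun a => X (a, u)) V ≠ 0) :
    ∀ V u : ℝ, deriv (deriv (fun a => X (a, u))) V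
      = deriv (fun s => ((c s) ^ 2)⁻¹ * deriv (fun r => X (V, r)) s) u :=
  stmt_6_general c hc hc0 v X hv hX hPDE hinv
end

section
/- Let ε ∈ ℝ and let u : ℝ × ℝ → ℝ be a twice continuously differentiable solution with u(x,t) > 0 for all (x,t) of u_t(x,t) = u_xx(x,t) + u(x,t)·ln(u(x,t)) for all (x,t). Define ũ(x,t) = u(x,t)·exp(ε·e^t). Then ũ(x,t) > 0 and ũ_t(x,t) = ũ_xx(x,t) + ũ(x,t)·ln(ũ(x,t)) for all (x,t). -/
/-!
For ũ = u·e^{h(t)} the x-derivatives only pick up the factor e^{h(t)}, while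
ũ_t = (u_t + h'·u)·e^{h} and ũ ln ũ = (u ln u + h·u)·e^{h}. Hence ũ solves the equation
whenever u does and h' = h, which holds for h(t) = ε eᵗ.
-/

open Real

def SolvesLogReactionDiffusion (u : ℝ × ℝ → ℝ) : Prop :=
  ∀ x t : ℝ, deriv (fun s => u (x, s)) t
    = deriv (deriv (fun y => u (y, t))) x + u (x, t) * log (u (x, t))

theorem SolvesLogReactionDiffusion.mul_exp {u : ℝ × ℝ → ℝ} {h : ℝ → ℝ}
    (hu : SolvesLogReactionDiffusion u)
    (hut : ∀ x t : ℝ, DifferentiableAt ℝ (fun s => u (x, s)) t)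
    (hne : ∀ p, u p ≠ 0) (hh : ∀ t, HasDerivAt h (h t) t) :
    SolvesLogReactionDiffusion fun p => u p * exp (h p.2) := by
  intro x t
  have h_time : deriv (fun s => u (x, s) * exp (h s)) t
      = deriv (fun s => u (x, s)) t * exp (h t) + u (x, t) * (exp (h t) * h t) :=
    ((hut x t).hasDerivAt.mul (hh t).exp).deriv
  have h_space : deriv (deriv fun y => u (y, t) * exp (h t)) x
      = deriv (deriv fun y => u (y, t)) x * exp (h t) := by
    rw [deriv_mul_const_field', deriv_mul_const_field']
  have h_log : log (u (x, t) * exp (h t)) = log (u (x, t)) + h t := by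
    rw [log_mul (hne _) (exp_ne_zero _), log_exp]
  simp only [h_time, h_space, h_log, hu x t]
  ring

/-- The point symmetry X₅ of u_t = u_xx + u ln u maps positive solutions to
positive solutions: if u > 0 solves the equation then so does
ũ(x,t) = u(x,t)·exp(ε·eᵗ). -/
theorem stmt_13 (ε : ℝ) (u : ℝ × ℝ → ℝ) (hu : ContDiff ℝ 2 u)
    (hpos : ∀ x t : ℝ, 0 < u (x, t))
    (hPDE : ∀ x t : ℝ, deriv (fun s => u (x, s)) t
      = deriv (deriv (fun y => u (y, t))) x + u (x, t) * Real.log (u (x, t))) :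
    let w : ℝ × ℝ → ℝ := fun p => u p * Real.exp (ε * Real.exp p.2)
    ∀ x t : ℝ, 0 < w (x, t) ∧ deriv (fun s => w (x, s)) t
      = deriv (deriv (fun y => w (y, t))) x + w (x, t) * Real.log (w (x, t)) := by
  intro w x t
  have hut : ∀ x t : ℝ, DifferentiableAt ℝ (fun s => u (x, s)) t := fun x t =>
    (hu.differentiable two_ne_zero _).comp t
      ((differentiableAt_const x).prodMk differentiableAt_id)
  have hne : ∀ p, u p ≠ 0 := fun p => (hpos p.1 p.2).ne'
  exact ⟨mul_pos (hpos x t) (exp_pos _),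
    SolvesLogReactionDiffusion.mul_exp hPDE hut hne
      (fun t => (hasDerivAt_exp t).const_mul ε) x t⟩
end

section
/- Let ε ∈ ℝ and let u : ℝ × ℝ → ℝ be a twice continuously differentiable solution with u(x,t) > 0 for all (x,t) of u_t(x,t) = u_xx(x,t) + u(x,t)·ln(u(x,t)) for all (x,t). Define ũ(x,t) = u(x − 2ε·e^t, t)·exp(−ε·e^t·x + ε²·e^{2t}). Then ũ(x,t) > 0 and ũ_t(x,t) = ũ_xx(x,t) + ũ(x,t)·ln(ũ(x,t)) for all (x,t). -/
/-!
The transformation is a Galilean boost with velocity a(t) = 2ε·eᵗ followed by multiplication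
by e^φ, where φ = -ε·eᵗ·x + ε²·e^{2t} is affine in x. Since log(v·e^φ) = log v + φ, conjugating
∂ₜ - ∂ₓ² - log by e^φ adds the drift -2φₓ·∂ₓ, which cancels the drift -a'·∂ₓ of the moving
frame, and the zeroth-order term φₜ - φₓ² - φ, which vanishes.
-/

open Real

theorem hasDerivAt_comp_prodMk {u : ℝ × ℝ → ℝ} {f g : ℝ → ℝ} {f' g' s : ℝ}
    (hu : DifferentiableAt ℝ u (f s, g s)) (hf : HasDerivAt f f' s) (hg : HasDerivAt g g' s) :
    HasDerivAt (fun r => u (f r, g r))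
      (f' * deriv (fun y => u (y, g s)) (f s) + g' * deriv (fun r => u (f s, r)) (g s)) s := by
  have partial_fst : deriv (fun y => u (y, g s)) (f s) = fderiv ℝ u (f s, g s) (1, 0) :=
    (hu.hasFDerivAt.comp_hasDerivAt (f s) ((hasDerivAt_id _).prodMk (hasDerivAt_const _ _))).deriv
  have partial_snd : deriv (fun r => u (f s, r)) (g s) = fderiv ℝ u (f s, g s) (0, 1) :=
    (hu.hasFDerivAt.comp_hasDerivAt (g s) ((hasDerivAt_const _ _).prodMk (hasDerivAt_id _))).deriv
  have split : ((f', g') : ℝ × ℝ) = f' • ((1 : ℝ), (0 : ℝ)) + g' • ((0 : ℝ), (1 : ℝ)) := by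
    simp
  have h := hu.hasFDerivAt.comp_hasDerivAt s (hf.prodMk hg)
  rw [split, map_add, map_smul, map_smul, smul_eq_mul, smul_eq_mul] at h
  rwa [partial_fst, partial_snd]

theorem hasDerivAt_comp_sub_mul_exp {g : ℝ → ℝ} {g' c b d x : ℝ} (hg : HasDerivAt g g' (x - c)) :
    HasDerivAt (fun y => g (y - c) * exp (b * y + d))
      ((g' + b * g (x - c)) * exp (b * x + d)) x := by
  have hshift : HasDerivAt (fun y => g (y - c)) g' x := by
    simpa using hg.comp_sub_const x c
  have hexp : HasDerivAt (fun y => exp (b * y + d)) (exp (b * x + d) * b) x := by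
    simpa using (((hasDerivAt_id x).const_mul b).add_const d).exp
  exact (hshift.fun_mul hexp).congr_deriv (by ring)

theorem deriv_comp_sub_mul_exp {g : ℝ → ℝ} (hg : Differentiable ℝ g) (c b d : ℝ) :
    deriv (fun y => g (y - c) * exp (b * y + d))
      = fun y => (deriv g (y - c) + b * g (y - c)) * exp (b * y + d) :=
  funext fun _ => (hasDerivAt_comp_sub_mul_exp (hg _).hasDerivAt).deriv

theorem deriv_deriv_comp_sub_mul_exp {g : ℝ → ℝ} (hg : Differentiable ℝ g)
    (hg' : Differentiable ℝ (deriv g)) (c b d x : ℝ) :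
    deriv (deriv (fun y => g (y - c) * exp (b * y + d))) x
      = (deriv (deriv g) (x - c) + 2 * b * deriv g (x - c) + b ^ 2 * g (x - c))
        * exp (b * x + d) := by
  have hh : HasDerivAt (fun z => deriv g z + b * g z)
      (deriv (deriv g) (x - c) + b * deriv g (x - c)) (x - c) :=
    (hg' _).hasDerivAt.add ((hg _).hasDerivAt.const_mul b)
  rw [deriv_comp_sub_mul_exp hg, (hasDerivAt_comp_sub_mul_exp hh).deriv]
  ring

/-- The point symmetry X₆ of u_t = u_xx + u ln u maps positive solutions to
positive solutions: if u > 0 solves the equation then so does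
ũ(x,t) = u(x − 2ε·eᵗ, t)·exp(−ε·eᵗ·x + ε²·e^{2t}). -/
theorem stmt_14 (ε : ℝ) (u : ℝ × ℝ → ℝ) (hu : ContDiff ℝ 2 u)
    (hpos : ∀ x t : ℝ, 0 < u (x, t))
    (hPDE : ∀ x t : ℝ, deriv (fun s => u (x, s)) t
      = deriv (deriv (fun y => u (y, t))) x + u (x, t) * Real.log (u (x, t))) :
    let w : ℝ × ℝ → ℝ := fun p =>
      u (p.1 - 2 * ε * Real.exp p.2, p.2)
        * Real.exp (-ε * Real.exp p.2 * p.1 + ε ^ 2 * Real.exp (2 * p.2))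
    ∀ x t : ℝ, 0 < w (x, t) ∧ deriv (fun s => w (x, s)) t
      = deriv (deriv (fun y => w (y, t))) x + w (x, t) * Real.log (w (x, t)) := by
  intro w x t
  refine ⟨mul_pos (hpos _ _) (exp_pos _), ?_⟩
  have hslice : ContDiff ℝ 2 fun y => u (y, t) := hu.comp (contDiff_id.prodMk contDiff_const)
  obtain ⟨hslice_diff, -, hslice_deriv⟩ := contDiff_succ_iff_deriv (n := 1).mp hslice
  have hxx := deriv_deriv_comp_sub_mul_exp hslice_diff (hslice_deriv.differentiable one_ne_zero)
    (2 * ε * exp t) (-ε * exp t) (ε ^ 2 * exp (2 * t)) x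
  have hshift : HasDerivAt (fun s => x - 2 * ε * exp s) (-(2 * ε * exp t)) t := by
    simpa using ((hasDerivAt_exp t).const_mul (2 * ε)).const_sub x
  have hphase : HasDerivAt (fun s => -ε * exp s * x + ε ^ 2 * exp (2 * s))
      (-ε * exp t * x + ε ^ 2 * (exp (2 * t) * 2)) t :=
    (((hasDerivAt_exp t).const_mul (-ε)).mul_const x).add
      (((hasDerivAt_id' t).const_mul 2).exp.const_mul (ε ^ 2) |>.congr_deriv (by ring))
  have ht := (hasDerivAt_comp_prodMk ((hu.differentiable two_ne_zero) _) hshift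
    (hasDerivAt_id' t)).fun_mul hphase.exp
  beta_reduce at hxx
  simp only [w]
  rw [ht.deriv, hxx, hPDE, log_mul (hpos _ _).ne' (exp_ne_zero _), log_exp,
    show exp (2 * t) = exp t ^ 2 by rw [← exp_nat_mul]; norm_num]
  ring
end

section
/- Let ε ∈ ℝ and let u : ℝ × ℝ → ℝ be a twice continuously differentiable function with u(x,t) ≠ 0 for all (x,t) satisfying the nonlinear wave equation u_tt(x,t) = ∂/∂x [ u(x,t)⁻⁴·u_x(x,t) ] for all (x,t). Define ũ(x,t) = (1 + ε·t)·u(x, t/(1 + ε·t)) for (x,t) with 1 + ε·t ≠ 0. Then at every point (x,t) with 1 + ε·t ≠ 0, ũ satisfies ũ_tt(x,t) = ∂/∂x [ ũ(x,t)⁻⁴·ũ_x(x,t) ]. -/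
/-!
Write `a = 1 + εt` and `σ(t) = t / a`, so that `σ' = a⁻²`. In time, `ũ_t = εu + u_t(x, σ)/a`, and
differentiating once more the two `εu_t/a²` terms cancel, leaving `ũ_tt = u_tt(x, σ)/a³`. In space,
`ũ` is `u(·, σ)` scaled by the constant `a`, and the flux `u⁻⁴u_x` is homogeneous of degree `-3`
in `u`, so `(ũ⁻⁴ũ_x)_x = (u⁻⁴u_x)_x(x, σ)/a³` as well.
-/

/-- The flow of `X₆ = t²∂_t + tu∂_u` with parameter `ε`, acting on a time profile `f`. -/
noncomputable def projectiveTimeChange (ε : ℝ) (f : ℝ → ℝ) (t : ℝ) : ℝ :=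
  (1 + ε * t) * f (t / (1 + ε * t))

section TimeDerivatives

variable {ε t : ℝ}

lemma hasDerivAt_div_one_add_mul (ht : 1 + ε * t ≠ 0) :
    HasDerivAt (fun r => r / (1 + ε * r)) (((1 + ε * t) ^ 2)⁻¹) t := by
  have h := (hasDerivAt_id t).div (((hasDerivAt_id t).const_mul ε).const_add 1) ht
  refine h.congr_deriv ?_
  simp only [id]
  field_simp
  ring

lemma hasDerivAt_projectiveTimeChange {f : ℝ → ℝ} (hf : DifferentiableAt ℝ f (t / (1 + ε * t)))
    (ht : 1 + ε * t ≠ 0) :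
    HasDerivAt (projectiveTimeChange ε f)
      (ε * f (t / (1 + ε * t)) + deriv f (t / (1 + ε * t)) / (1 + ε * t)) t := by
  have h := (((hasDerivAt_id t).const_mul ε).const_add 1).mul
    (hf.hasDerivAt.comp t (hasDerivAt_div_one_add_mul ht))
  refine h.congr_deriv ?_
  simp only [id, Function.comp_apply]
  field_simp

lemma deriv_deriv_projectiveTimeChange {f : ℝ → ℝ} (hf : Differentiable ℝ f)
    (hf' : DifferentiableAt ℝ (deriv f) (t / (1 + ε * t))) (ht : 1 + ε * t ≠ 0) :
    deriv (deriv (projectiveTimeChange ε f)) t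
      = deriv (deriv f) (t / (1 + ε * t)) / (1 + ε * t) ^ 3 := by
  have hopen : IsOpen {s : ℝ | 1 + ε * s ≠ 0} :=
    isOpen_ne.preimage (by fun_prop)
  have hfirst : deriv (projectiveTimeChange ε f) =ᶠ[nhds t]
      fun s => ε * f (s / (1 + ε * s)) + deriv f (s / (1 + ε * s)) / (1 + ε * s) := by
    filter_upwards [hopen.mem_nhds ht] with s hs
    exact (hasDerivAt_projectiveTimeChange (hf _) hs).deriv
  have hσ := hasDerivAt_div_one_add_mul ht
  have hsecond := ((hf _).hasDerivAt.comp t hσ).const_mul ε |>.add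
    ((hf'.hasDerivAt.comp t hσ).div (((hasDerivAt_id t).const_mul ε).const_add 1) ht)
  rw [hfirst.deriv_eq]
  refine hsecond.deriv.trans ?_
  simp only [id, Function.comp_apply]
  field_simp
  ring

end TimeDerivatives

lemma deriv_flux_const_mul {c : ℝ} (hc : c ≠ 0) (n : ℕ) (h : ℝ → ℝ) (x : ℝ) :
    deriv (fun y => ((c * h y) ^ (n + 1))⁻¹ * deriv (fun z => c * h z) y) x
      = (c ^ n)⁻¹ * deriv (fun y => (h y ^ (n + 1))⁻¹ * deriv h y) x := by
  have hflux : (fun y => ((c * h y) ^ (n + 1))⁻¹ * deriv (fun z => c * h z) y)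
      = fun y => (c ^ n)⁻¹ * ((h y ^ (n + 1))⁻¹ * deriv h y) := by
    funext y
    rw [deriv_const_mul_field, mul_pow, pow_succ]
    field_simp
  rw [hflux, deriv_const_mul_field]

theorem stmt_15_general (ε : ℝ) (u : ℝ × ℝ → ℝ) (hu : ContDiff ℝ 2 u)
    (hPDE : ∀ x t : ℝ, deriv (deriv (fun s => u (x, s))) t
      = deriv (fun y => (u (y, t) ^ 4)⁻¹ * deriv (fun z => u (z, t)) y) x) :
    let w : ℝ × ℝ → ℝ := fun p => (1 + ε * p.2) * u (p.1, p.2 / (1 + ε * p.2))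
    ∀ x t : ℝ, 1 + ε * t ≠ 0 →
      deriv (deriv (fun s => w (x, s))) t
        = deriv (fun y => (w (y, t) ^ 4)⁻¹ * deriv (fun z => w (z, t)) y) x := by
  intro w x t ht
  have hslice : ContDiff ℝ 2 (fun s => u (x, s)) := hu.comp (contDiff_const.prodMk contDiff_id)
  calc deriv (deriv (projectiveTimeChange ε fun s => u (x, s))) t
      = deriv (deriv fun s => u (x, s)) (t / (1 + ε * t)) / (1 + ε * t) ^ 3 :=
        deriv_deriv_projectiveTimeChange (hslice.differentiable two_ne_zero)
          (hslice.differentiable_deriv_two _) ht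
    _ = ((1 + ε * t) ^ 3)⁻¹ * deriv (fun y => (u (y, t / (1 + ε * t)) ^ (3 + 1))⁻¹
          * deriv (fun z => u (z, t / (1 + ε * t))) y) x := by
        rw [hPDE, div_eq_inv_mul]
    _ = _ := (deriv_flux_const_mul ht 3 (fun z => u (z, t / (1 + ε * t))) x).symm

/-- The point symmetry X₆ = t²∂/∂t + tu∂/∂u of the nonlinear wave equation
u_tt = (u⁻⁴u_x)_x maps nonvanishing solutions to solutions on the domain where
1 + εt ≠ 0: ũ(x,t) = (1 + εt)u(x, t/(1 + εt)) is again a solution there. -/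
theorem stmt_15 (ε : ℝ) (u : ℝ × ℝ → ℝ) (hu : ContDiff ℝ 2 u)
    (hne : ∀ x t : ℝ, u (x, t) ≠ 0)
    (hPDE : ∀ x t : ℝ, deriv (deriv (fun s => u (x, s))) t
      = deriv (fun y => (u (y, t) ^ 4)⁻¹ * deriv (fun z => u (z, t)) y) x) :
    let w : ℝ × ℝ → ℝ := fun p => (1 + ε * p.2) * u (p.1, p.2 / (1 + ε * p.2))
    ∀ x t : ℝ, 1 + ε * t ≠ 0 →
      deriv (deriv (fun s => w (x, s))) t
        = deriv (fun y => (w (y, t) ^ 4)⁻¹ * deriv (fun z => w (z, t)) y) x :=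
  stmt_15_general ε u hu hPDE
end

section
/- Let u : ℝ × ℝ → ℝ be a twice continuously differentiable solution with u(x,t) > 0 for all (x,t) of u_t(x,t) = u_xx(x,t) + u(x,t)·ln(u(x,t)) for all (x,t). Define U(x,t) = e^{−t}·ln(u(x,t)). Then U_t(x,t) = U_xx(x,t) + e^{t}·U_x(x,t)² for all (x,t). -/
/-! Writing `L = ln u`, the equation for `u` becomes `L_t = L_xx + L_x² + L`, since
`u_xx / u = L_xx + L_x²`. Multiplying by `e^{-t}` removes the linear term `L`, and
`U_x = e^{-t} L_x` turns `L_x²` into `e^t U_x²`. -/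

open Real

theorem deriv_log_comp_of_pos {g : ℝ → ℝ} (hg : Differentiable ℝ g) (hpos : ∀ y, 0 < g y) :
    deriv (fun y => log (g y)) = fun y => deriv g y / g y :=
  funext fun y => deriv.log (hg y) (hpos y).ne'

theorem deriv_deriv_log_comp_of_pos {g : ℝ → ℝ} (hg : ContDiff ℝ 2 g) (hpos : ∀ y, 0 < g y)
    (x : ℝ) :
    deriv (deriv fun y => log (g y)) x = deriv (deriv g) x / g x - (deriv g x / g x) ^ 2 := by
  rw [deriv_log_comp_of_pos (hg.differentiable two_ne_zero) hpos,
    deriv_fun_div (hg.differentiable_deriv_two x) (hg.differentiable two_ne_zero x) (hpos x).ne']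
  field_simp

theorem log_solves_of_solves_reaction_diffusion {u : ℝ × ℝ → ℝ} (hu : ContDiff ℝ 2 u)
    (hpos : ∀ x t : ℝ, 0 < u (x, t)) {x t : ℝ}
    (hPDE : deriv (fun s => u (x, s)) t
      = deriv (deriv (fun y => u (y, t))) x + u (x, t) * log (u (x, t))) :
    deriv (fun s => log (u (x, s))) t
      = deriv (deriv fun y => log (u (y, t))) x + (deriv (fun y => log (u (y, t))) x) ^ 2
        + log (u (x, t)) := by
  have hspace : ContDiff ℝ 2 fun y => u (y, t) := hu.comp (contDiff_id.prodMk contDiff_const)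
  have htime : Differentiable ℝ fun s => u (x, s) :=
    (hu.comp (contDiff_const.prodMk contDiff_id)).differentiable two_ne_zero
  rw [deriv.log (htime t) (hpos x t).ne', deriv_deriv_log_comp_of_pos hspace (hpos · t),
    deriv_log_comp_of_pos (hspace.differentiable two_ne_zero) (hpos · t), hPDE]
  have hu_ne : u (x, t) ≠ 0 := (hpos x t).ne'
  field_simp
  ring

theorem exp_neg_mul_solves_of_solves {L : ℝ × ℝ → ℝ} {x t : ℝ}
    (hL : DifferentiableAt ℝ (fun s => L (x, s)) t)
    (hPDE : deriv (fun s => L (x, s)) t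
      = deriv (deriv fun y => L (y, t)) x + (deriv (fun y => L (y, t)) x) ^ 2 + L (x, t)) :
    deriv (fun s => exp (-s) * L (x, s)) t
      = deriv (deriv fun y => exp (-t) * L (y, t)) x
        + exp t * (deriv (fun y => exp (-t) * L (y, t)) x) ^ 2 := by
  have hexp : HasDerivAt (fun s => exp (-s)) (-exp (-t)) t := by
    simpa using (hasDerivAt_neg t).exp
  rw [deriv_fun_mul hexp.differentiableAt hL, hexp.deriv, deriv_const_mul_field',
    deriv_const_mul_field', hPDE]
  have hinv : exp t * exp (-t) = 1 := by rw [← exp_add, add_neg_cancel, exp_zero]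
  linear_combination -(deriv (fun y => L (y, t)) x) ^ 2 * exp (-t) * hinv

/-- The change of variables U = e^{−t}ln u maps positive solutions of
u_t = u_xx + u ln u to solutions of U_T = U_XX + e^T U_X². -/
theorem stmt_17 (u : ℝ × ℝ → ℝ) (hu : ContDiff ℝ 2 u)
    (hpos : ∀ x t : ℝ, 0 < u (x, t))
    (hPDE : ∀ x t : ℝ, deriv (fun s => u (x, s)) t
      = deriv (deriv (fun y => u (y, t))) x + u (x, t) * Real.log (u (x, t))) :
    let U : ℝ × ℝ → ℝ := fun p => Real.exp (-p.2) * Real.log (u p)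
    ∀ x t : ℝ, deriv (fun s => U (x, s)) t
      = deriv (deriv (fun y => U (y, t))) x
        + Real.exp t * (deriv (fun y => U (y, t)) x) ^ 2 := by
  intro U x t
  have hlog_time : DifferentiableAt ℝ (fun s => log (u (x, s))) t :=
    (((hu.comp (contDiff_const.prodMk contDiff_id)).differentiable two_ne_zero) t).log
      (hpos x t).ne'
  exact exp_neg_mul_solves_of_solves (L := fun p => log (u p)) hlog_time
    (log_solves_of_solves_reaction_diffusion hu hpos (hPDE x t))
end

section
/- Let u : ℝ × ℝ → ℝ be a smooth (C³ suffices) solution with u(x,t) > 0 for all (x,t) of u_t(x,t) = u_xx(x,t) + u(x,t)·ln(u(x,t)) for all (x,t). Define p(x,t) = e^{−t}·u_x(x,t)/u(x,t). Then p_t(x,t) = p_xx(x,t) + 2·e^{t}·p(x,t)·p_x(x,t) for all (x,t). -/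
/-! With `U = e^{-t} ln u`, the equation `u_t = u_xx + u ln u` becomes `U_t = U_xx + e^t U_x²`:
the factor `e^{-t}` exactly cancels the reaction term. The given `p` is `U_x`, so differentiating
this equation in `x` and exchanging `U_xt = U_tx` gives `p_t = p_xx + 2 e^t p p_x`. -/

open Real

noncomputable section

def partialX (f : ℝ × ℝ → ℝ) (q : ℝ × ℝ) : ℝ := deriv (fun y => f (y, q.2)) q.1

def partialT (f : ℝ × ℝ → ℝ) (q : ℝ × ℝ) : ℝ := deriv (fun s => f (q.1, s)) q.2

/-- The paper's potential `U = e^{-t} ln u` of equation (3.22). -/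
def scaledLog (u : ℝ × ℝ → ℝ) (q : ℝ × ℝ) : ℝ := exp (-q.2) * log (u q)

end

section PartialDerivatives

variable {f : ℝ × ℝ → ℝ} {q : ℝ × ℝ}

theorem DifferentiableAt.hasDerivAt_section_fst (hf : DifferentiableAt ℝ f q) :
    HasDerivAt (fun y => f (y, q.2)) (fderiv ℝ f q (1, 0)) q.1 :=
  hf.hasFDerivAt.comp_hasDerivAt q.1 ((hasDerivAt_id q.1).prodMk (hasDerivAt_const q.1 q.2))

theorem DifferentiableAt.hasDerivAt_section_snd (hf : DifferentiableAt ℝ f q) :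
    HasDerivAt (fun s => f (q.1, s)) (fderiv ℝ f q (0, 1)) q.2 :=
  hf.hasFDerivAt.comp_hasDerivAt q.2 ((hasDerivAt_const q.2 q.1).prodMk (hasDerivAt_id q.2))

theorem partialX_eq_fderiv (hf : Differentiable ℝ f) :
    partialX f = fun q => fderiv ℝ f q (1, 0) :=
  funext fun q => (hf q).hasDerivAt_section_fst.deriv

theorem partialT_eq_fderiv (hf : Differentiable ℝ f) :
    partialT f = fun q => fderiv ℝ f q (0, 1) :=
  funext fun q => (hf q).hasDerivAt_section_snd.deriv

theorem DifferentiableAt.hasDerivAt_partialX (hf : DifferentiableAt ℝ f q) :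
    HasDerivAt (fun y => f (y, q.2)) (partialX f q) q.1 := by
  rw [partialX, hf.hasDerivAt_section_fst.deriv]
  exact hf.hasDerivAt_section_fst

theorem DifferentiableAt.hasDerivAt_partialT (hf : DifferentiableAt ℝ f q) :
    HasDerivAt (fun s => f (q.1, s)) (partialT f q) q.2 := by
  rw [partialT, hf.hasDerivAt_section_snd.deriv]
  exact hf.hasDerivAt_section_snd

theorem ContDiff.partialX {n : WithTop ℕ∞} (hf : ContDiff ℝ (n + 1) f) :
    ContDiff ℝ n (partialX f) := by
  rw [partialX_eq_fderiv (hf.differentiable (by simp))]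
  exact (hf.fderiv_right le_rfl).clm_apply contDiff_const

theorem ContDiff.partialT {n : WithTop ℕ∞} (hf : ContDiff ℝ (n + 1) f) :
    ContDiff ℝ n (partialT f) := by
  rw [partialT_eq_fderiv (hf.differentiable (by simp))]
  exact (hf.fderiv_right le_rfl).clm_apply contDiff_const

theorem fderiv_fderiv_apply_const {𝕜 E F : Type*} [NontriviallyNormedField 𝕜]
    [NormedAddCommGroup E] [NormedSpace 𝕜 E] [NormedAddCommGroup F] [NormedSpace 𝕜 F]
    {g : E → F} {x : E} (hg : DifferentiableAt 𝕜 (fderiv 𝕜 g) x) (v w : E) :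
    fderiv 𝕜 (fun y => fderiv 𝕜 g y v) x w = fderiv 𝕜 (fderiv 𝕜 g) x w v := by
  rw [fderiv_clm_apply hg (differentiableAt_const v)]
  simp

theorem partialT_partialX_comm (hf : ContDiff ℝ 2 f) :
    partialT (partialX f) = partialX (partialT f) := by
  have hd : Differentiable ℝ f := hf.differentiable (by norm_num)
  have hdd : Differentiable ℝ (fderiv ℝ f) := (hf.fderiv_right le_rfl).differentiable one_ne_zero
  rw [partialT_eq_fderiv (ContDiff.partialX (n := 1) hf |>.differentiable one_ne_zero),
    partialX_eq_fderiv (ContDiff.partialT (n := 1) hf |>.differentiable one_ne_zero),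
    partialX_eq_fderiv hd, partialT_eq_fderiv hd]
  funext q
  rw [fderiv_fderiv_apply_const (hdd q), fderiv_fderiv_apply_const (hdd q),
    (hf.contDiffAt.isSymmSndFDerivAt (by simp)).eq]

end PartialDerivatives

section ScaledLog

variable {u : ℝ × ℝ → ℝ} {q : ℝ × ℝ}

theorem hasDerivAt_scaledLog_fst (hu : DifferentiableAt ℝ u q) (hq : u q ≠ 0) :
    HasDerivAt (fun y => scaledLog u (y, q.2)) (exp (-q.2) * partialX u q / u q) q.1 := by
  have h := (hu.hasDerivAt_partialX.log hq).const_mul (exp (-q.2))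
  rwa [← mul_div_assoc] at h

theorem partialX_scaledLog (hu : Differentiable ℝ u) (hne : ∀ q, u q ≠ 0) :
    partialX (scaledLog u) = fun q => exp (-q.2) * partialX u q / u q :=
  funext fun q => (hasDerivAt_scaledLog_fst (hu q) (hne q)).deriv

theorem partialT_scaledLog (hu : DifferentiableAt ℝ u q) (hq : u q ≠ 0) :
    partialT (scaledLog u) q = exp (-q.2) * (partialT u q / u q - log (u q)) := by
  have he : HasDerivAt (fun s => exp (-s)) (-exp (-q.2)) q.2 := by
    simpa using (hasDerivAt_neg q.2).exp
  refine (he.mul (hu.hasDerivAt_partialT.log hq)).deriv.trans ?_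
  ring

theorem partialX_partialX_scaledLog (hu : ContDiff ℝ 2 u) (hne : ∀ q, u q ≠ 0) :
    partialX (partialX (scaledLog u)) q =
      exp (-q.2) * (partialX (partialX u) q * u q - partialX u q ^ 2) / u q ^ 2 := by
  have hd : Differentiable ℝ u := hu.differentiable (by norm_num)
  have hdx : Differentiable ℝ (partialX u) :=
    (ContDiff.partialX (n := 1) hu).differentiable one_ne_zero
  rw [partialX_scaledLog hd hne]
  refine ((((hdx q).hasDerivAt_partialX.const_mul (exp (-q.2))).div
    (hd q).hasDerivAt_partialX (hne q))).deriv.trans ?_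
  field_simp

theorem partialT_scaledLog_eq_of_reactionDiffusion (hu : ContDiff ℝ 2 u) (hne : ∀ q, u q ≠ 0)
    (hPDE : ∀ q, partialT u q = partialX (partialX u) q + u q * log (u q)) (q : ℝ × ℝ) :
    partialT (scaledLog u) q =
      partialX (partialX (scaledLog u)) q + exp q.2 * partialX (scaledLog u) q ^ 2 := by
  have hd : Differentiable ℝ u := hu.differentiable (by norm_num)
  rw [partialT_scaledLog (hd q) (hne q), partialX_partialX_scaledLog hu hne,
    partialX_scaledLog hd hne, hPDE q]
  have hq := hne q
  simp only [Real.exp_neg]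
  field_simp
  ring

end ScaledLog

theorem partialT_partialX_eq_of_potentialEq {U : ℝ × ℝ → ℝ} (hU : ContDiff ℝ 3 U)
    (hPDE : ∀ q, partialT U q = partialX (partialX U) q + exp q.2 * partialX U q ^ 2)
    (q : ℝ × ℝ) :
    partialT (partialX U) q = partialX (partialX (partialX U)) q
      + 2 * exp q.2 * partialX U q * partialX (partialX U) q := by
  have hp : ContDiff ℝ 2 (partialX U) := ContDiff.partialX (n := 2) hU
  have hpx : ContDiff ℝ 1 (partialX (partialX U)) := ContDiff.partialX (n := 1) hp
  rw [partialT_partialX_comm (hU.of_le (by norm_num)), funext hPDE]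
  have hpx' := (hpx.differentiable one_ne_zero q).hasDerivAt_partialX
  have hp' := (hp.differentiable two_ne_zero q).hasDerivAt_partialX
  refine (hpx'.add ((hp'.pow 2).const_mul (exp q.2))).deriv.trans ?_
  ring

/-- Composing U = e^{−t}ln u with p = U_X: a positive C³ solution of
u_t = u_xx + u ln u yields a solution p = e^{−t}u_x/u of p_t = p_xx + 2eᵗpp_x. -/
theorem stmt_18 (u : ℝ × ℝ → ℝ) (hu : ContDiff ℝ 3 u)
    (hpos : ∀ x t : ℝ, 0 < u (x, t))
    (hPDE : ∀ x t : ℝ, deriv (fun s => u (x, s)) t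
      = deriv (deriv (fun y => u (y, t))) x + u (x, t) * Real.log (u (x, t))) :
    let p : ℝ × ℝ → ℝ := fun q => Real.exp (-q.2) * deriv (fun y => u (y, q.2)) q.1 / u q
    ∀ x t : ℝ, deriv (fun s => p (x, s)) t
      = deriv (deriv (fun y => p (y, t))) x
        + 2 * Real.exp t * p (x, t) * deriv (fun y => p (y, t)) x := by
  intro p x t
  have hne : ∀ q, u q ≠ 0 := fun q => (hpos q.1 q.2).ne'
  have hp : p = partialX (scaledLog u) :=
    (partialX_scaledLog (hu.differentiable (by norm_num)) hne).symm
  have hU : ContDiff ℝ 3 (scaledLog u) :=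
    (contDiff_snd.neg.exp).mul (hu.log hne)
  rw [hp]
  exact partialT_partialX_eq_of_potentialEq hU
    (partialT_scaledLog_eq_of_reactionDiffusion (hu.of_le (by norm_num)) hne
      fun q => hPDE q.1 q.2) (x, t)
end
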